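/- Let μ > 0, b > 0, Λ > 0 and ξ be real numbers, and set ψ_bo(r) = μ/(b + √(b² − r²)) for 0 < r < b. Suppose 0 < r_p < r_a < b are such that the radicand W(r) = 2(ξ − ψ_bo(r)) − Λ²/r² satisfies W(r_p) = W(r_a) = 0 and W(r) > 0 for all r ∈ (r_p, r_a) (this forces ξ > 0). Then the radial action of the bounded isochrone satisfies (1/π)·∫_{r_p}^{r_a} √(W(r)) dr = −μ/√(2ξ) + (1/2)·(√(Λ² + 4bμ) − Λ). -/

import Mathlib

open intervalIntegral Real Set

/-!
Substituting `s = b + √(b² - r²)`, so that `r² = s (2b - s)`, turns `r² W(r)` into the quadratic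
`-2ξ s² + (4bξ + 2μ) s - (4bμ + Λ²)` in `s`, with roots `s_a = s(r_a)` and `s_p = s(r_p)`. By Vieta,
`W(r) = 2ξ (s - s_a)(s_p - s) / r²`, and since `s'(r) (1/s - 1/(2b - s)) = 2/r`, the integrand
`√W` is `√(2ξ)/2` times the derivative of `P_{s_a,s_p}(s) + P_{2b-s_p,2b-s_a}(2b - s)`, where
`P_{α,β}` is the elementary primitive of `√((x - α)(β - x)) / x`, whose increment over `[α, β]` is
`π ((α + β)/2 - √(αβ))`.
-/

theorem HasDerivAt.arcsin_of_one_sub_sq_eq {f : ℝ → ℝ} {f' q x : ℝ} (hf : HasDerivAt f f' x)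
    (hq : 0 < q) (h : 1 - f x ^ 2 = q ^ 2) : HasDerivAt (fun y => arcsin (f y)) (f' / q) x := by
  have hlt : f x ^ 2 < 1 := by nlinarith
  have hne_neg : f x ≠ -1 := by rintro hfx; rw [hfx] at hlt; norm_num at hlt
  have hne_one : f x ≠ 1 := by rintro hfx; rw [hfx] at hlt; norm_num at hlt
  refine ((hasDerivAt_arcsin hne_neg hne_one).comp x hf).congr_deriv ?_
  rw [h, sqrt_sq hq.le]
  ring

noncomputable def sqrtQuadDivPrimitive (α β x : ℝ) : ℝ :=
  √((x - α) * (β - x)) + (α + β) / 2 * arcsin ((2 * x - α - β) / (β - α))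
    - √(α * β) * arcsin (((α + β) * x - 2 * α * β) / (x * (β - α)))

theorem hasDerivAt_sqrtQuadDivPrimitive {α β x : ℝ} (hα : 0 < α) (hx : x ∈ Ioo α β) :
    HasDerivAt (sqrtQuadDivPrimitive α β) (√((x - α) * (β - x)) / x) x := by
  obtain ⟨hαx, hxβ⟩ := hx
  have hx0 : 0 < x := hα.trans hαx
  have hβα : 0 < β - α := by linarith
  set R := √((x - α) * (β - x))
  have hR : 0 < R := sqrt_pos.mpr (mul_pos (by linarith) (by linarith))
  have hR2 : R ^ 2 = (x - α) * (β - x) := sq_sqrt (by nlinarith)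
  set m := √(α * β)
  have hm : 0 < m := sqrt_pos.mpr (by nlinarith)
  have hm2 : m ^ 2 = α * β := sq_sqrt (by nlinarith)
  have hquad : HasDerivAt (fun y => (y - α) * (β - y)) (α + β - 2 * x) x :=
    (((hasDerivAt_id x).sub_const α).mul ((hasDerivAt_id x).const_sub β)).congr_deriv (by
      simp only [id]; ring)
  have haff : HasDerivAt (fun y => (2 * y - α - β) / (β - α)) (2 / (β - α)) x :=
    (((((hasDerivAt_id x).const_mul 2).sub_const α).sub_const β).div_const (β - α)).congr_deriv
      (by ring)
  have hmob : HasDerivAt (fun y => ((α + β) * y - 2 * α * β) / (y * (β - α)))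
      (2 * α * β / (x ^ 2 * (β - α))) x :=
    ((((hasDerivAt_id x).const_mul (α + β)).sub_const (2 * α * β)).div
      ((hasDerivAt_id x).mul_const (β - α)) (by positivity)).congr_deriv (by
        simp only [id]; field_simp; ring)
  have harcsin_aff := haff.arcsin_of_one_sub_sq_eq (q := 2 * R / (β - α)) (by positivity) (by
    field_simp; rw [hR2]; ring)
  have harcsin_mob := hmob.arcsin_of_one_sub_sq_eq (q := 2 * m * R / (x * (β - α)))
    (by positivity) (by field_simp; rw [hR2, hm2]; ring)
  refine (((hquad.sqrt (hR2 ▸ pow_ne_zero 2 hR.ne')).add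
    (harcsin_aff.const_mul ((α + β) / 2))).sub (harcsin_mob.const_mul m)).congr_deriv ?_
  field_simp
  linear_combination (-2 * R) * hR2

theorem continuousOn_sqrtQuadDivPrimitive {α β : ℝ} (hαβ : α ≠ β) :
    ContinuousOn (sqrtQuadDivPrimitive α β) (Ioi 0) := by
  have hβα : β - α ≠ 0 := sub_ne_zero.mpr hαβ.symm
  unfold sqrtQuadDivPrimitive
  refine ContinuousOn.sub (by fun_prop) (continuousOn_const.mul
    (continuous_arcsin.comp_continuousOn (ContinuousOn.div (by fun_prop) (by fun_prop) ?_)))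
  exact fun x hx => mul_ne_zero (ne_of_gt hx) hβα

theorem sqrtQuadDivPrimitive_right_sub_left {α β : ℝ} (hα : 0 < α) (hαβ : α < β) :
    sqrtQuadDivPrimitive α β β - sqrtQuadDivPrimitive α β α = π * ((α + β) / 2 - √(α * β)) := by
  have hβα : β - α ≠ 0 := sub_ne_zero.mpr hαβ.ne'
  have hβ : β ≠ 0 := (hα.trans hαβ).ne'
  simp only [sqrtQuadDivPrimitive, sub_self, mul_zero, zero_mul, sqrt_zero]
  rw [show (2 * β - α - β) / (β - α) = 1 by field_simp; ring,
    show ((α + β) * β - 2 * α * β) / (β * (β - α)) = 1 by field_simp; ring,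
    show (2 * α - α - β) / (β - α) = -1 by field_simp; ring,
    show ((α + β) * α - 2 * α * β) / (α * (β - α)) = -1 by field_simp; ring,
    arcsin_one, arcsin_neg_one]
  ring

noncomputable def isochroneS (b r : ℝ) : ℝ := b + √(b ^ 2 - r ^ 2)

theorem isochroneS_mul_two_mul_sub {b r : ℝ} (h : r ^ 2 ≤ b ^ 2) :
    isochroneS b r * (2 * b - isochroneS b r) = r ^ 2 := by
  unfold isochroneS
  linear_combination (-1) * sq_sqrt (sub_nonneg.mpr h)

theorem le_isochroneS (b r : ℝ) : b ≤ isochroneS b r :=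
  le_add_of_nonneg_right (sqrt_nonneg _)

theorem isochroneS_lt_isochroneS {b r r' : ℝ} (hr : 0 ≤ r) (hrr' : r < r') (hr' : r' ≤ b) :
    isochroneS b r' < isochroneS b r :=
  add_lt_add_right (sqrt_lt_sqrt (by nlinarith) (by nlinarith)) b

theorem isochroneS_lt_two_mul {b r : ℝ} (hr : 0 < r) (hrb : r ≤ b) : isochroneS b r < 2 * b := by
  have h := isochroneS_lt_isochroneS le_rfl hr hrb
  unfold isochroneS at h ⊢
  rwa [zero_pow two_ne_zero, sub_zero, sqrt_sq (hr.le.trans hrb), ← two_mul] at h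

theorem hasDerivAt_isochroneS {b r : ℝ} (h : r ^ 2 < b ^ 2) :
    HasDerivAt (isochroneS b) (-r / √(b ^ 2 - r ^ 2)) r := by
  have hpos : 0 < √(b ^ 2 - r ^ 2) := sqrt_pos.mpr (sub_pos.mpr h)
  refine ((((hasDerivAt_pow 2 r).const_sub (b ^ 2)).sqrt (sub_pos.mpr h).ne').const_add
    b).congr_deriv ?_
  field_simp
  ring

noncomputable def isochroneActionPrimitive (b sa sp r : ℝ) : ℝ :=
  sqrtQuadDivPrimitive sa sp (isochroneS b r)
    + sqrtQuadDivPrimitive (2 * b - sp) (2 * b - sa) (2 * b - isochroneS b r)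

theorem hasDerivAt_isochroneActionPrimitive {b sa sp r : ℝ} (hr : 0 < r) (hrb : r < b)
    (hsa : 0 < sa) (hsp : sp < 2 * b) (hs : isochroneS b r ∈ Ioo sa sp) :
    HasDerivAt (isochroneActionPrimitive b sa sp)
      (2 * √((isochroneS b r - sa) * (sp - isochroneS b r)) / r) r := by
  have hr2 : r ^ 2 < b ^ 2 := by nlinarith
  have hs' : 2 * b - isochroneS b r ∈ Ioo (2 * b - sp) (2 * b - sa) :=
    ⟨by linarith [hs.2], by linarith [hs.1]⟩
  have hS := hasDerivAt_isochroneS hr2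
  have h1 := (hasDerivAt_sqrtQuadDivPrimitive hsa hs).comp r hS
  have h2 := (hasDerivAt_sqrtQuadDivPrimitive (by linarith) hs').comp r (hS.const_sub (2 * b))
  refine (h1.add h2).congr_deriv ?_
  rw [show (2 * b - isochroneS b r - (2 * b - sp)) * (2 * b - sa - (2 * b - isochroneS b r))
    = (isochroneS b r - sa) * (sp - isochroneS b r) by ring]
  have hprod := isochroneS_mul_two_mul_sub hr2.le
  set R := √((isochroneS b r - sa) * (sp - isochroneS b r))
  set u := √(b ^ 2 - r ^ 2)
  set s := isochroneS b r
  have hsu : s = b + u := rfl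
  have hu : 0 < u := sqrt_pos.mpr (sub_pos.mpr hr2)
  have hs0 : 0 < s := hsa.trans hs.1
  have hbu : 2 * b - s = b - u := by rw [hsu]; ring
  have hbu0 : 0 < b - u := hbu ▸ sub_pos.mpr (hs.2.trans hsp)
  rw [hbu] at hprod ⊢
  field_simp
  linear_combination (-2 * R * u) * hprod + R * r ^ 2 * hsu

theorem integral_sqrt_div_isochroneS {b rp ra sa sp : ℝ} (hrp : 0 < rp) (hlt : rp < ra)
    (hra : ra ≤ b) (hsa : isochroneS b ra = sa) (hsp : isochroneS b rp = sp) :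
    ∫ r in rp..ra, √((isochroneS b r - sa) * (sp - isochroneS b r)) / r
      = π / 2 * (2 * b - sa - sp + √(sa * sp) - √((2 * b - sp) * (2 * b - sa))) := by
  have hb : 0 < b := by linarith
  have hsa0 : 0 < sa := hsa ▸ hb.trans_le (le_isochroneS b ra)
  have hsasp : sa < sp := hsa ▸ hsp ▸ isochroneS_lt_isochroneS hrp.le hlt hra
  have hsp2b : sp < 2 * b := hsp ▸ isochroneS_lt_two_mul hrp (by linarith)
  have hS : Continuous (isochroneS b) := by unfold isochroneS; fun_prop
  have hcont : ContinuousOn (isochroneActionPrimitive b sa sp) (Icc rp ra) := by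
    refine ((continuousOn_sqrtQuadDivPrimitive hsasp.ne).comp hS.continuousOn ?_).add
      ((continuousOn_sqrtQuadDivPrimitive (by linarith)).comp
        (continuous_const.sub hS).continuousOn ?_)
    · exact fun r _ => hb.trans_le (le_isochroneS b r)
    · exact fun r hr => sub_pos.mpr (isochroneS_lt_two_mul (hrp.trans_le hr.1) (hr.2.trans hra))
  have hderiv : ∀ r ∈ Ioo rp ra, HasDerivAt (fun r => isochroneActionPrimitive b sa sp r / 2)
      (√((isochroneS b r - sa) * (sp - isochroneS b r)) / r) r := by
    intro r ⟨hrpr, hrra⟩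
    refine ((hasDerivAt_isochroneActionPrimitive (hrp.trans hrpr) (hrra.trans_le hra) hsa0 hsp2b
      ⟨?_, ?_⟩).div_const 2).congr_deriv (by ring)
    · exact hsa ▸ isochroneS_lt_isochroneS (hrp.trans hrpr).le hrra hra
    · exact hsp ▸ isochroneS_lt_isochroneS hrp.le hrpr (hrra.le.trans hra)
  have hint : IntervalIntegrable (fun r => √((isochroneS b r - sa) * (sp - isochroneS b r)) / r)
      MeasureTheory.volume rp ra := by
    refine ContinuousOn.intervalIntegrable ?_
    rw [uIcc_of_le hlt.le]
    exact ContinuousOn.div (by fun_prop) continuousOn_id fun r hr => (hrp.trans_le hr.1).ne'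
  rw [integral_eq_sub_of_hasDerivAt_of_le hlt.le (hcont.div_const 2) hderiv hint]
  have hright := sqrtQuadDivPrimitive_right_sub_left hsa0 hsasp
  have hleft := sqrtQuadDivPrimitive_right_sub_left (α := 2 * b - sp) (β := 2 * b - sa)
    (by linarith) (by linarith)
  simp only [isochroneActionPrimitive, hsa, hsp]
  linear_combination (-1/2) * hright + (1/2) * hleft

theorem quadratic_coeffs_of_two_roots {a b c x y : ℝ} (hxy : x ≠ y)
    (hx : a * x ^ 2 + b * x + c = 0) (hy : a * y ^ 2 + b * y + c = 0) :
    b = -a * (x + y) ∧ c = a * x * y := by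
  have hb : b = -a * (x + y) := by
    have h : (x - y) * (a * (x + y) + b) = 0 := by linear_combination hx - hy
    linear_combination (mul_eq_zero.mp h).resolve_left (sub_ne_zero.mpr hxy)
  exact ⟨hb, by linear_combination hx - x * hb⟩

noncomputable def isochroneRadicand (μ b Λ ξ r : ℝ) : ℝ :=
  2 * (ξ - μ / isochroneS b r) - Λ ^ 2 / r ^ 2

theorem isochroneRadicand_mul_sq {μ b Λ ξ r : ℝ} (hr : 0 < r) (hrb : r ≤ b) :
    isochroneRadicand μ b Λ ξ r * r ^ 2
      = -2 * ξ * isochroneS b r ^ 2 + (4 * b * ξ + 2 * μ) * isochroneS b r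
        + -(4 * b * μ + Λ ^ 2) := by
  have hs : isochroneS b r ≠ 0 := (hr.trans_le (hrb.trans (le_isochroneS b r))).ne'
  have hprod := isochroneS_mul_two_mul_sub (pow_le_pow_left₀ hr.le hrb 2)
  unfold isochroneRadicand
  field_simp
  linear_combination (-2 * (ξ * isochroneS b r - μ)) * hprod

theorem isochroneRadicand_vieta {μ b Λ ξ rp ra : ℝ} (hrp : 0 < rp) (hlt : rp < ra) (hra : ra ≤ b)
    (hp : isochroneRadicand μ b Λ ξ rp = 0) (ha : isochroneRadicand μ b Λ ξ ra = 0) :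
    μ = ξ * (isochroneS b ra + isochroneS b rp - 2 * b) ∧
      Λ ^ 2 = 2 * ξ * ((2 * b - isochroneS b rp) * (2 * b - isochroneS b ra)) := by
  have hroot : ∀ r, 0 < r → r ≤ b → isochroneRadicand μ b Λ ξ r = 0 → -2 * ξ * isochroneS b r ^ 2
      + (4 * b * ξ + 2 * μ) * isochroneS b r + -(4 * b * μ + Λ ^ 2) = 0 := fun r hr hrb h0 => by
    rw [← isochroneRadicand_mul_sq hr hrb, h0, zero_mul]
  obtain ⟨hlin, hconst⟩ := quadratic_coeffs_of_two_roots
    (isochroneS_lt_isochroneS hrp.le hlt hra).ne (hroot ra (hrp.trans hlt) hra ha)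
    (hroot rp hrp (hlt.le.trans hra) hp)
  exact ⟨by linear_combination hlin / 2, by linear_combination -hconst - 2 * b * hlin⟩

theorem sqrt_isochroneRadicand {μ b Λ ξ sa sp r : ℝ} (hξ : 0 ≤ ξ) (hr : 0 < r) (hrb : r ≤ b)
    (hμ : μ = ξ * (sa + sp - 2 * b)) (hΛ : Λ ^ 2 = 2 * ξ * ((2 * b - sp) * (2 * b - sa))) :
    √(isochroneRadicand μ b Λ ξ r)
      = √(2 * ξ) * (√((isochroneS b r - sa) * (sp - isochroneS b r)) / r) := by
  have hW : isochroneRadicand μ b Λ ξ r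
      = 2 * ξ * ((isochroneS b r - sa) * (sp - isochroneS b r) / r ^ 2) := by
    rw [← mul_div_assoc, eq_div_iff (pow_pos hr 2).ne', isochroneRadicand_mul_sq hr hrb, hμ, hΛ]
    ring
  rw [hW, sqrt_mul (by positivity), sqrt_div' _ (sq_nonneg r), sqrt_sq hr.le]

theorem stmt_13_general (μ b Λ ξ : ℝ) (hΛ : 0 < Λ)
    (rp ra : ℝ) (hrp : 0 < rp) (hlt : rp < ra) (hra : ra < b)
    (W : ℝ → ℝ)
    (hW : ∀ r : ℝ, W r = 2 * (ξ - μ / (b + Real.sqrt (b ^ 2 - r ^ 2))) - Λ ^ 2 / r ^ 2)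
    (hWp : W rp = 0) (hWa : W ra = 0) :
    (1 / Real.pi) * ∫ r in rp..ra, Real.sqrt (W r)
      = -μ / Real.sqrt (2 * ξ) + (1 / 2) * (Real.sqrt (Λ ^ 2 + 4 * b * μ) - Λ) := by
  obtain rfl : W = isochroneRadicand μ b Λ ξ := funext hW
  obtain ⟨hμ, hΛsq⟩ := isochroneRadicand_vieta hrp hlt hra.le hWp hWa
  have hsa2b := isochroneS_lt_two_mul (hrp.trans hlt) hra.le
  have hsp2b := isochroneS_lt_two_mul hrp (hlt.trans hra).le
  generalize hsa : isochroneS b ra = sa at hμ hΛsq hsa2b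
  generalize hsp : isochroneS b rp = sp at hμ hΛsq hsp2b
  have hξ : 0 < ξ :=
    pos_of_mul_pos_left (b := 2 * ((2 * b - sp) * (2 * b - sa))) (by nlinarith) (by nlinarith)
  have hsqrtW : EqOn (fun r => √(isochroneRadicand μ b Λ ξ r))
      (fun r => √(2 * ξ) * (√((isochroneS b r - sa) * (sp - isochroneS b r)) / r)) (uIcc rp ra) :=
    fun r hr => by
      rw [uIcc_of_le hlt.le] at hr
      exact sqrt_isochroneRadicand hξ.le (hrp.trans_le hr.1) (hr.2.trans hra.le) hμ hΛsq
  rw [integral_congr hsqrtW, integral_const_mul,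
    integral_sqrt_div_isochroneS hrp hlt hra.le hsa hsp]
  have hc : √(2 * ξ) ^ 2 = 2 * ξ := sq_sqrt (by positivity)
  have hsum : √(Λ ^ 2 + 4 * b * μ) = √(2 * ξ) * √(sa * sp) := by
    rw [← sqrt_mul (by positivity), hΛsq, hμ]
    congr 1
    ring
  have hΛ_eq : Λ = √(2 * ξ) * √((2 * b - sp) * (2 * b - sa)) := by
    rw [← sqrt_mul (by positivity), ← hΛsq, sqrt_sq hΛ.le]
  rw [hsum, hΛ_eq, hμ]
  field_simp
  linear_combination (2 * b - sa - sp) * hc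

/-- **bounded isochrone radial action.** For the bounded isochrone potential
`ψ_bo(r) = μ/(b + √(b² − r²))` on `(0,b)` with `μ, b > 0`, an orbit of energy `ξ` and
angular momentum `Λ > 0` with periastron `r_p` and apoastron `r_a`, `0 < r_p < r_a < b`,
(zeros of the radicand `W(r) = 2(ξ − ψ_bo(r)) − Λ²/r²`, positive in between — which
forces `ξ > 0`) has radial action
`(1/π) ∫_{r_p}^{r_a} √(W(r)) dr = −μ/√(2ξ) + (1/2)(√(Λ² + 4bμ) − Λ)`. -/
theorem stmt_13 (μ b Λ ξ : ℝ) (hμ : 0 < μ) (hb : 0 < b) (hΛ : 0 < Λ)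
    (rp ra : ℝ) (hrp : 0 < rp) (hlt : rp < ra) (hra : ra < b)
    (W : ℝ → ℝ)
    (hW : ∀ r : ℝ, W r = 2 * (ξ - μ / (b + Real.sqrt (b ^ 2 - r ^ 2))) - Λ ^ 2 / r ^ 2)
    (hWp : W rp = 0) (hWa : W ra = 0)
    (hWpos : ∀ r ∈ Set.Ioo rp ra, 0 < W r) :
    (1 / Real.pi) * ∫ r in rp..ra, Real.sqrt (W r)
      = -μ / Real.sqrt (2 * ξ) + (1 / 2) * (Real.sqrt (Λ ^ 2 + 4 * b * μ) - Λ) :=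
  stmt_13_general μ b Λ ξ hΛ rp ra hrp hlt hra W hW hWp hWa
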